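/- For the two-layer shallow water matrix A(U) with U = (h₁,q₁,h₂,q₂), h₁,h₂ > 0, the characteristic polynomial of A(U) factors such that when q₁ = q₂ = 0 the eigenvalues are λ = ±√(g h_± ) where h_± = ((h₁+h₂) ± √((h₁−h₂)² + 4 r h₁h₂))/2; in particular for r ∈ (0,1) all four eigenvalues are real and the largest in absolute value is bounded by √(g(h₁+h₂)). -/

import Mathlib

/-- Two-layer shallow water system at rest: the eigenvalues of
`A = [[0,1,0,0],[gh₁,0,gh₁,0],[0,0,0,1],[rgh₂,0,gh₂,0]]` are `±√(g h_±)` with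
`h_± = ((h₁+h₂) ± √((h₁−h₂)² + 4rh₁h₂))/2`; for `0 < r < 1` all four
eigenvalues are real and bounded in absolute value by `√(g(h₁+h₂))`. -/
theorem stmt18 (g r h₁ h₂ : ℝ) (hg : 0 < g) (hr : 0 < r) (hr1 : r < 1)
    (hh₁ : 0 < h₁) (hh₂ : 0 < h₂) :
    let A : Matrix (Fin 4) (Fin 4) ℝ :=
      !![0, 1, 0, 0;
         g * h₁, 0, g * h₁, 0;
         0, 0, 0, 1;
         r * g * h₂, 0, g * h₂, 0]
    let hp : ℝ := ((h₁ + h₂) + Real.sqrt ((h₁ - h₂) ^ 2 + 4 * r * h₁ * h₂)) / 2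
    let hm : ℝ := ((h₁ + h₂) - Real.sqrt ((h₁ - h₂) ^ 2 + 4 * r * h₁ * h₂)) / 2
    (∀ lam : ℝ,
      (A - lam • (1 : Matrix (Fin 4) (Fin 4) ℝ)).det = 0 ↔
        (lam = Real.sqrt (g * hp) ∨ lam = -Real.sqrt (g * hp) ∨
         lam = Real.sqrt (g * hm) ∨ lam = -Real.sqrt (g * hm))) ∧
    (∀ lam : ℝ,
      (A - lam • (1 : Matrix (Fin 4) (Fin 4) ℝ)).det
        = lam ^ 4 - g * (h₁ + h₂) * lam ^ 2 + g ^ 2 * h₁ * h₂ * (1 - r)) ∧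
    0 ≤ hm ∧ hm ≤ hp ∧
    Real.sqrt (g * hp) ≤ Real.sqrt (g * (h₁ + h₂)) := by
  intro A hp hm
  set D := Real.sqrt ((h₁ - h₂) ^ 2 + 4 * r * h₁ * h₂) with hD
  have hDnn : 0 ≤ D := Real.sqrt_nonneg _
  have harg : 0 ≤ (h₁ - h₂) ^ 2 + 4 * r * h₁ * h₂ := by positivity
  have hDsq : D ^ 2 = (h₁ - h₂) ^ 2 + 4 * r * h₁ * h₂ := Real.sq_sqrt harg
  have hDle : D ≤ h₁ + h₂ := by
    rw [hD]
    rw [show (h₁ + h₂) = Real.sqrt ((h₁ + h₂) ^ 2) from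
      (Real.sqrt_sq (by positivity)).symm]
    apply Real.sqrt_le_sqrt
    nlinarith [mul_pos hh₁ hh₂]
  have hmnn : 0 ≤ hm := by simp only [hm]; linarith
  have hmhp : hm ≤ hp := by simp only [hm, hp]; linarith
  have hple : hp ≤ h₁ + h₂ := by simp only [hp]; linarith
  have hsum : hp + hm = h₁ + h₂ := by simp only [hp, hm]; ring
  have hprod : hp * hm = h₁ * h₂ * (1 - r) := by
    simp only [hp, hm]
    have : ((h₁ + h₂) + D) / 2 * (((h₁ + h₂) - D) / 2)
        = ((h₁ + h₂) ^ 2 - D ^ 2) / 4 := by ring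
    rw [this, hDsq]; ring
  have hpnn : 0 ≤ hp := le_trans hmnn hmhp
  have hdet : ∀ lam : ℝ,
      (A - lam • (1 : Matrix (Fin 4) (Fin 4) ℝ)).det
        = lam ^ 4 - g * (h₁ + h₂) * lam ^ 2 + g ^ 2 * h₁ * h₂ * (1 - r) := by
    intro lam
    simp [A, Matrix.det_succ_row_zero, Fin.sum_univ_succ, Matrix.smul_apply, Matrix.one_apply, show (Fin.succAbove 1 2 : Fin 4) = 3 from rfl]
    ring
  refine ⟨?_, hdet, hmnn, hmhp, ?_⟩
  · intro lam
    rw [hdet lam]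
    have hfac : lam ^ 4 - g * (h₁ + h₂) * lam ^ 2 + g ^ 2 * h₁ * h₂ * (1 - r)
        = (lam ^ 2 - g * hp) * (lam ^ 2 - g * hm) := by
      have h1 : g * hp + g * hm = g * (h₁ + h₂) := by rw [← mul_add, hsum]
      have h2 : (g * hp) * (g * hm) = g ^ 2 * h₁ * h₂ * (1 - r) := by
        rw [show (g * hp) * (g * hm) = g ^ 2 * (hp * hm) by ring, hprod]; ring
      nlinarith [h1, h2]
    rw [hfac, mul_eq_zero, sub_eq_zero, sub_eq_zero]
    have key : ∀ c : ℝ, 0 ≤ c → (lam ^ 2 = c ↔ (lam = Real.sqrt c ∨ lam = -Real.sqrt c)) := by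
      intro c hc
      constructor
      · intro h
        have h2 : lam ^ 2 = (Real.sqrt c) ^ 2 := by rw [Real.sq_sqrt hc, h]
        exact sq_eq_sq_iff_eq_or_eq_neg.mp h2
      · rintro (rfl | rfl) <;> simp [Real.sq_sqrt hc]
    rw [key _ (by positivity : (0:ℝ) ≤ g * hp), key _ (by positivity : (0:ℝ) ≤ g * hm)]
    tauto
  · apply Real.sqrt_le_sqrt
    nlinarith
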